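/- Define polynomials Qₙ(x) by Q₁(x) = x² and Q_{n+1}(x) = (n!)² x² + ∑_{j=0}^{n-1} C(n,j) C(n,j+1) Q_{j+1}(x) Q_{n-j}(x). Then for all n ≥ 1 and all real x, |Qₙ(x)| ≤ n! (n-1)! · max(1,|x|)^{2n}. -/

import Mathlib

/-!
The binomial weights exactly cancel the factorials of the inductive bounds:
`C(n,j) C(n,j+1) (j+1)! j! (n-j)! (n-j-1)! = (n!)²`. Hence, with `M = max 1 |x| ≥ 1`, each of the
`n` summands of the recursion is at most `(n!)² M^{2(n+1)}`, and so is the leading term;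
summing gives `(n+1) (n!)² M^{2(n+1)} = (n+1)! n! M^{2(n+1)}`.
-/

open Finset

open scoped Nat

theorem choose_mul_choose_succ_mul_factorials {n j : ℕ} (hj : j < n) :
    n.choose j * n.choose (j + 1) * ((j + 1)! * j ! * ((n - j)! * (n - j - 1)!)) = n ! * n ! := by
  have hj₀ := Nat.choose_mul_factorial_mul_factorial hj.le
  have hj₁ := Nat.choose_mul_factorial_mul_factorial (Nat.succ_le_of_lt hj)
  rw [show n - (j + 1) = n - j - 1 by omega] at hj₁
  calc _ = (n.choose j * j ! * (n - j)!) * (n.choose (j + 1) * (j + 1)! * (n - j - 1)!) := by ring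
    _ = n ! * n ! := by rw [hj₀, hj₁]

theorem abs_choose_mul_choose_succ_mul_mul_le {n j : ℕ} (hj : j < n) {M a b : ℝ}
    (ha : |a| ≤ (j + 1)! * j ! * M ^ (2 * (j + 1)))
    (hb : |b| ≤ (n - j)! * (n - j - 1)! * M ^ (2 * (n - j))) :
    |n.choose j * n.choose (j + 1) * a * b| ≤ n ! * n ! * M ^ (2 * (n + 1)) := by
  have hexp : 2 * (j + 1) + 2 * (n - j) = 2 * (n + 1) := by omega
  calc |n.choose j * n.choose (j + 1) * a * b|
      = (n.choose j * n.choose (j + 1) : ℝ) * (|a| * |b|) := by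
        simp only [abs_mul, Nat.abs_cast]; ring
    _ ≤ (n.choose j * n.choose (j + 1) : ℝ) *
        ((j + 1)! * j ! * M ^ (2 * (j + 1)) * ((n - j)! * (n - j - 1)! * M ^ (2 * (n - j)))) := by
        gcongr
        exact (abs_nonneg a).trans ha
    _ = ((n.choose j * n.choose (j + 1) * ((j + 1)! * j ! * ((n - j)! * (n - j - 1)!)) : ℕ) : ℝ) *
        M ^ (2 * (j + 1) + 2 * (n - j)) := by push_cast; ring
    _ = n ! * n ! * M ^ (2 * (n + 1)) := by
        rw [choose_mul_choose_succ_mul_factorials hj, hexp]; push_cast; ring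

theorem sq_le_max_one_abs_pow (x : ℝ) {n : ℕ} (hn : 1 ≤ n) : x ^ 2 ≤ max 1 |x| ^ (2 * n) :=
  calc x ^ 2 = |x| ^ 2 := (sq_abs x).symm
    _ ≤ max 1 |x| ^ 2 := by gcongr; exact le_max_right _ _
    _ ≤ max 1 |x| ^ (2 * n) := pow_le_pow_right₀ (le_max_left _ _) (by omega)

theorem Q_poly_bound (Q : ℕ → ℝ → ℝ)
    (hQ1 : ∀ x : ℝ, Q 1 x = x ^ 2)
    (hrec : ∀ n : ℕ, 1 ≤ n → ∀ x : ℝ,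
      Q (n + 1) x = (n.factorial : ℝ) ^ 2 * x ^ 2 +
        ∑ j ∈ Finset.range n,
          (n.choose j : ℝ) * (n.choose (j + 1) : ℝ) * Q (j + 1) x * Q (n - j) x) :
    ∀ n : ℕ, 1 ≤ n → ∀ x : ℝ,
      |Q n x| ≤ (n.factorial : ℝ) * ((n - 1).factorial : ℝ) * max 1 |x| ^ (2 * n) := by
  intro n
  induction n using Nat.strong_induction_on with | _ n ih => ?_
  intro hn x
  obtain rfl | ⟨n, hn₁, rfl⟩ : n = 1 ∨ ∃ m, 1 ≤ m ∧ n = m + 1 :=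
    (eq_or_lt_of_le hn).imp Eq.symm fun h => ⟨n - 1, by omega, by omega⟩
  · simpa [hQ1] using sq_le_max_one_abs_pow x le_rfl
  have hterm : ∀ j ∈ range n, |(n.choose j : ℝ) * n.choose (j + 1) * Q (j + 1) x * Q (n - j) x|
      ≤ n ! * n ! * max 1 |x| ^ (2 * (n + 1)) := fun j hj =>
    have hj : j < n := mem_range.mp hj
    abs_choose_mul_choose_succ_mul_mul_le hj (ih (j + 1) (by omega) (by omega) x)
      (ih (n - j) (by omega) (by omega) x)
  have hlead : |(n ! : ℝ) ^ 2 * x ^ 2| ≤ n ! ^ 2 * max 1 |x| ^ (2 * (n + 1)) := by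
    rw [abs_of_nonneg (by positivity)]
    gcongr
    exact sq_le_max_one_abs_pow x (by omega)
  rw [hrec n hn₁ x]
  calc _ ≤ |(n ! : ℝ) ^ 2 * x ^ 2| + ∑ j ∈ range n,
          |(n.choose j : ℝ) * n.choose (j + 1) * Q (j + 1) x * Q (n - j) x| :=
        (abs_add_le _ _).trans (add_le_add_right (abs_sum_le_sum_abs _ _) _)
    _ ≤ n ! ^ 2 * max 1 |x| ^ (2 * (n + 1)) +
          ∑ _j ∈ range n, (n ! * n ! * max 1 |x| ^ (2 * (n + 1)) : ℝ) :=
        add_le_add hlead (sum_le_sum hterm)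
    _ = _ := by simp [Nat.factorial_succ]; ring
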